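/- arXiv:2010.06731 — 2 statements merged into one kernel-verified Lean document; each statement's English description precedes it below -/
import Mathlib

section
/- In particular (taking u = a, v = b in the previous setting): for any σ ∈ S_{p+q}, one has σ ≤ b △ a in the right weak order, where a = σ|{1,...,p} and b = st(σ|{p+1,...,n}). -/
/-- Standardization (0-based): replace each letter by its rank among the letters of `w`. -/
def stW (w : List ℕ) : List ℕ := w.map (fun x => (w.filter (· < x)).length)

/-- `w` is the one-line word of a permutation of `{0, …, n-1}` where `n = w.length`. -/
def IsPermWord (w : List ℕ) : Prop := w.Perm (List.range w.length)

/-- The inversion set of a word: pairs `(j, i)` with `j > i` and `j` to the left of `i`. -/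
def invSet (w : List ℕ) : Set (ℕ × ℕ) :=
  {p | p.2 < p.1 ∧ ∃ k l : ℕ, k < l ∧ w[k]? = some p.1 ∧ w[l]? = some p.2}

/-- The right weak order: inclusion of inversion sets. -/
def weakLe (u v : List ℕ) : Prop := invSet u ⊆ invSet v

/-- Left shifted concatenation `v △ u`: the word `v̄ u`, `v̄` being `v` shifted by `|u|`. -/
def triangle (v u : List ℕ) : List ℕ := v.map (· + u.length) ++ u

/-- Right shifted concatenation `u □ v`: the word `u v̄`, `v̄` being `v` shifted by `|u|`. -/
def squareC (u v : List ℕ) : List ℕ := u ++ v.map (· + u.length)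

/-!
Since `σ` is a permutation of `{0, …, p+q-1}`, its letters `≥ p` are exactly `p, …, p+q-1`;
standardizing them and shifting back by `|a| = p` gives them back unchanged, so `b △ a` is just
`σ|{≥ p}` followed by `σ|{< p}`. That word keeps the relative order of any two letters on the
same side of `p` and puts every large letter before every small one, so it keeps every inversion
of `σ`.
-/

open List

lemma pair_sublist_iff_exists_getElem? {α : Type*} {x y : α} {w : List α} :
    [x, y] <+ w ↔ ∃ k l : ℕ, k < l ∧ w[k]? = some x ∧ w[l]? = some y := by
  constructor
  · intro h
    induction w with
    | nil => simp at h
    | cons z w ih =>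
      cases h with
      | cons _ h =>
        obtain ⟨k, l, hkl, hk, hl⟩ := ih h
        exact ⟨k + 1, l + 1, by omega, by simpa using hk, by simpa using hl⟩
      | cons_cons _ h =>
        obtain ⟨m, hm⟩ := getElem?_of_mem (singleton_sublist.mp h)
        exact ⟨0, m + 1, by omega, by simp, by simpa using hm⟩
  · rintro ⟨k, l, hkl, hk, hl⟩
    obtain ⟨hk_lt, rfl⟩ := List.getElem?_eq_some_iff.mp hk
    have hy : y ∈ w.drop (k + 1) := by
      apply mem_of_getElem? (i := l - (k + 1))
      rwa [getElem?_drop, Nat.add_sub_cancel' hkl]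
    calc [w[k], y] <+ w[k] :: w.drop (k + 1) := cons_sublist_cons.mpr (singleton_sublist.mpr hy)
      _ = w.drop k := (drop_eq_getElem_cons hk_lt).symm
      _ <+ w := drop_sublist k w

lemma mem_invSet_iff {w : List ℕ} {j i : ℕ} : (j, i) ∈ invSet w ↔ i < j ∧ [j, i] <+ w := by
  rw [pair_sublist_iff_exists_getElem?]
  rfl

lemma pair_sublist_filter {α : Type*} {P : α → Bool} {x y : α} {w : List α} (h : [x, y] <+ w)
    (hx : P x) (hy : P y) : [x, y] <+ w.filter P := by
  simpa [hx, hy] using h.filter P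

theorem weakLe_filter_ge_append_filter_lt (w : List ℕ) (p : ℕ) :
    weakLe w (w.filter (fun x => p ≤ x) ++ w.filter (· < p)) := by
  rintro ⟨j, i⟩ hji
  obtain ⟨hij, hsub⟩ := mem_invSet_iff.mp hji
  refine mem_invSet_iff.mpr ⟨hij, ?_⟩
  rcases lt_or_ge j p with hjp | hpj
  · exact (pair_sublist_filter hsub (by simpa) (by simpa using hij.trans hjp)).trans
      (sublist_append_right _ _)
  rcases lt_or_ge i p with hip | hpi
  · have hjB : j ∈ w.filter (fun x => p ≤ x) := mem_filter.mpr ⟨hsub.subset (by simp), by simpa⟩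
    have hiA : i ∈ w.filter (· < p) := mem_filter.mpr ⟨hsub.subset (by simp), by simpa⟩
    exact (singleton_sublist.mpr hjB).append (singleton_sublist.mpr hiA)
  · exact (pair_sublist_filter hsub (by simpa) (by simpa)).trans (sublist_append_left _ _)

lemma length_filter_range_Ico (n a b : ℕ) :
    ((range n).filter (fun y => a ≤ y ∧ y < b)).length = min n b - min n a := by
  induction n with
  | zero => simp
  | succ n ih =>
    rw [range_succ, filter_append, length_append, ih]
    by_cases ha : a ≤ n <;> by_cases hb : n < b <;> simp [ha, hb] <;> omega

lemma length_filter_Ico_of_perm_range {w : List ℕ} {n : ℕ} (hw : w ~ range n) (a b : ℕ) :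
    (w.filter (fun y => a ≤ y ∧ y < b)).length = min n b - min n a := by
  rw [(hw.filter _).length_eq, length_filter_range_Ico]

lemma stW_filter_ge_of_perm_range {w : List ℕ} {n : ℕ} (hw : w ~ range n) (p : ℕ) :
    stW (w.filter (fun x => p ≤ x)) = (w.filter (fun x => p ≤ x)).map (· - p) := by
  refine map_congr_left fun x hx => ?_
  obtain ⟨hxw, hpx⟩ := mem_filter.mp hx
  have hxn : x < n := mem_range.mp (hw.subset hxw)
  simp only [decide_eq_true_eq] at hpx
  calc (w.filter (fun x => p ≤ x) |>.filter (· < x)).length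
      = (w.filter (fun y => p ≤ y ∧ y < x)).length := by
        rw [filter_filter]; congr 2; ext y; simpa using Bool.and_comm _ _
    _ = x - p := by rw [length_filter_Ico_of_perm_range hw]; omega

lemma triangle_stW_filter_eq_append {σ : List ℕ} (hσ : IsPermWord σ) (p : ℕ) :
    triangle (stW (σ.filter (fun x => p ≤ x))) (σ.filter (· < p))
      = σ.filter (fun x => p ≤ x) ++ σ.filter (· < p) := by
  have hlen : (σ.filter (· < p)).length = min σ.length p := by
    simpa using length_filter_Ico_of_perm_range hσ 0 p
  rw [triangle, stW_filter_ge_of_perm_range hσ, map_map, hlen]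
  congr 1
  refine (map_congr_left fun x hx => ?_).trans (map_id _)
  obtain ⟨hxσ, hpx⟩ := mem_filter.mp hx
  have hxn : x < σ.length := mem_range.mp (hσ.subset hxσ)
  simp only [decide_eq_true_eq] at hpx
  simp only [Function.comp_apply, id]
  omega

theorem weakLe_triangle_self_general (p : ℕ) (σ : List ℕ)
    (hσ : IsPermWord σ) :
    weakLe σ (triangle (stW (σ.filter (fun x => p ≤ x))) (σ.filter (· < p))) := by
  rw [triangle_stW_filter_eq_append hσ p]
  exact weakLe_filter_ge_append_filter_lt σ p

/-- For any `σ ∈ S_{p+q}`, one has `σ ≤ b △ a` in the right weak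
order, where `a = σ|{0,…,p-1}` and `b = st(σ|{p,…,p+q-1})`. -/
theorem weakLe_triangle_self (p q : ℕ) (σ : List ℕ)
    (hσ : IsPermWord σ) (hσn : σ.length = p + q) :
    weakLe σ (triangle (stW (σ.filter (fun x => p ≤ x))) (σ.filter (· < p))) :=
  weakLe_triangle_self_general p σ hσ
end

section
/- Main lemma: Let n = p + q, Σ a standard tableau with n cells, A = st(Σ|{1,...,p}) and B = st(Σ|{p+1,...,n}). Then for standard tableaux U with p cells and V with q cells: Σ ≤ V △ U in the Taskin weak order if and only if A ≤ U and B ≤ V. -/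
/-- Schensted row insertion: insert `x` into a row, returning the new row and the
bumped entry (if any). -/
def insertRow (x : ℕ) : List ℕ → List ℕ × Option ℕ
  | [] => ([x], none)
  | y :: ys =>
    if x < y then (x :: ys, some y)
    else
      let r := insertRow x ys
      (y :: r.1, r.2)

/-- Schensted insertion of a letter into a tableau (list of rows, bottom row first). -/
def insertTab : List (List ℕ) → ℕ → List (List ℕ)
  | [], x => [[x]]
  | r :: rs, x =>
    match insertRow x r with
    | (r', none) => r' :: rs
    | (r', some y) => r' :: insertTab rs y

/-- The Robinson–Schensted insertion tableau `P(w)` of a word `w`. -/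
def rsP (w : List ℕ) : List (List ℕ) := w.foldl insertTab []

/-- The (row) reading word of a tableau: rows read from the top row down. -/
def rword (t : List (List ℕ)) : List ℕ := t.reverse.flatten

/-- The Taskin weak order on tableaux: the transitive (and reflexive) closure of
the image of the right weak order under Robinson–Schensted insertion. -/
def taskinLe : List (List ℕ) → List (List ℕ) → Prop :=
  Relation.ReflTransGen (fun T T' => ∃ u v : List ℕ,
    IsPermWord u ∧ IsPermWord v ∧ rsP u = T ∧ rsP v = T' ∧ weakLe u v)


/-!
Restricting a word to the letters `< p`, or to the letters `≥ p` shifted down by `p`, and forming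
the shifted concatenation `v △ u` with one argument fixed, all respect both the right weak order
(inclusion of inversion sets) and Knuth equivalence. By Knuth's theorem, two permutation words are
Knuth equivalent exactly when they have the same insertion tableau, so such word maps are monotone
for the Taskin order. Restricting a chain `Σ ≤ V △ U` to the two intervals gives `A ≤ U` and
`B ≤ V`. Conversely `σ ≤ σ|_{≥p} σ|_{<p}` in the weak order and the latter word is `b △ a` with
`P(a) = A`, `P(b) = B`, so `Σ ≤ B △ A ≤ V △ A ≤ V △ U`.

Knuth's theorem rests on two facts: `w` is Knuth equivalent to the row word of `P(w)`,
and inserting the two sides of an elementary Knuth move into a row gives the same row and bumped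
words that are again equal or related by an elementary Knuth move.
-/

/-! ### Row insertion -/

lemma insertRow_nil (x : ℕ) : insertRow x [] = ([x], none) := rfl

lemma insertRow_cons_of_lt {x b : ℕ} (B : List ℕ) (h : x < b) :
    insertRow x (b :: B) = (x :: B, some b) := by
  simp [insertRow, h]

lemma insertRow_cons_of_le {x b : ℕ} (B : List ℕ) (h : b ≤ x) :
    insertRow x (b :: B) = (b :: (insertRow x B).1, (insertRow x B).2) := by
  simp [insertRow, not_lt.2 h]

-- The bound `m` lets `simp (disch := omega)` use this lemma for every letter `x ≥ m`.
lemma insertRow_append_of_le {A : List ℕ} {m x : ℕ} (B : List ℕ) (hA : ∀ a ∈ A, a ≤ m)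
    (hm : m ≤ x) : insertRow x (A ++ B) = (A ++ (insertRow x B).1, (insertRow x B).2) := by
  induction A with
  | nil => rfl
  | cons a A ih =>
    rw [List.forall_mem_cons] at hA
    simp [insertRow_cons_of_le _ (hA.1.trans hm), ih hA.2]

lemma insertRow_of_le {A : List ℕ} {m x : ℕ} (hA : ∀ a ∈ A, a ≤ m) (hm : m ≤ x) :
    insertRow x A = (A ++ [x], none) := by
  simpa [insertRow_nil] using insertRow_append_of_le [] hA hm

lemma insertRow_split {x : ℕ} {A B : List ℕ} (hA : ∀ a ∈ A, a ≤ x)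
    (hB : ∀ b ∈ B, x < b) :
    insertRow x (A ++ B) = (A ++ x :: B.tail, B.head?) := by
  rw [insertRow_append_of_le B hA le_rfl]
  cases B with
  | nil => rfl
  | cons b B => rw [insertRow_cons_of_lt B (hB b (by simp))]; rfl

lemma exists_split_of_sorted (x : ℕ) {R : List ℕ} (hR : R.Pairwise (· < ·)) :
    ∃ A B, R = A ++ B ∧ (∀ a ∈ A, a ≤ x) ∧ ∀ b ∈ B, x < b := by
  induction R with
  | nil => exact ⟨[], [], rfl, by simp, by simp⟩
  | cons r R ih =>
    rw [List.pairwise_cons] at hR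
    rcases le_or_gt r x with h | h
    · obtain ⟨A, B, rfl, hA, hB⟩ := ih hR.2
      exact ⟨r :: A, B, rfl, List.forall_mem_cons.2 ⟨h, hA⟩, hB⟩
    · exact ⟨[], r :: R, rfl, by simp,
        List.forall_mem_cons.2 ⟨h, fun b hb => h.trans (hR.1 b hb)⟩⟩

lemma insertRow_perm (x : ℕ) (R : List ℕ) :
    ((insertRow x R).1 ++ (insertRow x R).2.toList).Perm (x :: R) := by
  induction R with
  | nil => simp [insertRow]
  | cons r R ih =>
    by_cases h : x < r
    · simp [insertRow, h]
    · simpa [insertRow, h] using (ih.cons r).trans (List.Perm.swap x r R)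

lemma insertRow_snd (x : ℕ) (R : List ℕ) : (insertRow x R).2 = R.find? (x < ·) := by
  induction R with
  | nil => rfl
  | cons r R ih => by_cases h : x < r <;> simp [insertRow, h, ih]

lemma insertRow_fst_sorted {x : ℕ} {R : List ℕ} (hR : R.Pairwise (· < ·)) (hx : x ∉ R) :
    (insertRow x R).1.Pairwise (· < ·) := by
  obtain ⟨A, B, rfl, hA, hB⟩ := exists_split_of_sorted x hR
  rw [insertRow_split hA hB]
  rw [List.pairwise_append] at hR ⊢
  refine ⟨hR.1, List.pairwise_cons.2 ⟨fun b hb => hB b (List.mem_of_mem_tail hb),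
    hR.2.1.sublist (List.tail_sublist B)⟩, fun a ha c hc => ?_⟩
  rcases List.mem_cons.1 hc with rfl | hc
  · exact lt_of_le_of_ne (hA a ha) (by rintro rfl; exact hx (List.mem_append_left _ ha))
  · exact hR.2.2 a ha c (List.mem_of_mem_tail hc)

lemma insertTab_cons (R : List ℕ) (rs : List (List ℕ)) (x : ℕ) :
    insertTab (R :: rs) x = (insertRow x R).1 :: (insertRow x R).2.toList.foldl insertTab rs := by
  unfold insertTab
  rcases insertRow x R with ⟨R', _ | y⟩ <;> rfl

-- The column condition of a tableau is never needed, only these two properties.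
def RowStrict (T : List (List ℕ)) : Prop :=
  (∀ r ∈ T, r.Pairwise (· < ·)) ∧ T.flatten.Nodup

lemma RowStrict.tail {R : List ℕ} {rs : List (List ℕ)} (hT : RowStrict (R :: rs)) :
    RowStrict rs :=
  ⟨fun r hr => hT.1 r (List.mem_cons_of_mem R hr), (List.nodup_append.1 hT.2).2.1⟩

lemma RowStrict.not_mem_tail {R : List ℕ} {rs : List (List ℕ)} (hT : RowStrict (R :: rs))
    {t : ℕ} (ht : t ∈ R) : t ∉ rs.flatten := fun hts =>
  (List.nodup_append.1 (List.flatten_cons ▸ hT.2)).2.2 t ht t hts rfl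

lemma insertTab_flatten_perm (T : List (List ℕ)) (x : ℕ) :
    (insertTab T x).flatten.Perm (x :: T.flatten) := by
  induction T generalizing x with
  | nil => simp [insertTab]
  | cons R rs ih =>
    rw [insertTab_cons]
    have hrow := (insertRow_perm x R).append_right rs.flatten
    rcases h : (insertRow x R).2 with _ | y
    · simpa [h] using hrow
    · rw [h] at hrow
      simp only [Option.toList_some, List.foldl_cons, List.foldl_nil, List.flatten_cons]
      exact ((ih y).append_left _).trans (by simpa using hrow)

lemma RowStrict.insertTab {T : List (List ℕ)} (hT : RowStrict T) {x : ℕ}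
    (hx : x ∉ T.flatten) :
    RowStrict (insertTab T x) := by
  refine ⟨?_, (insertTab_flatten_perm T x).nodup_iff.2 (List.nodup_cons.2 ⟨hx, hT.2⟩)⟩
  induction T generalizing x with
  | nil => intro r hr; simp_all [_root_.insertTab]
  | cons R rs ih =>
    rw [insertTab_cons]
    have hxR : x ∉ R := fun h => hx (by simp [h])
    intro r hr
    rcases List.mem_cons.1 hr with rfl | hr
    · exact insertRow_fst_sorted (hT.1 R (by simp)) hxR
    rcases h : (insertRow x R).2 with _ | y
    · exact hT.1 r (by simp_all)
    · rw [h] at hr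
      have hyR : y ∈ R := List.mem_of_find?_eq_some (insertRow_snd x R ▸ h)
      exact ih hT.tail (hT.not_mem_tail hyR) r (by simpa using hr)

lemma rsP_append (a b : List ℕ) : rsP (a ++ b) = b.foldl insertTab (rsP a) := by
  simp [rsP, List.foldl_append]

lemma rsP_concat (w : List ℕ) (x : ℕ) : rsP (w ++ [x]) = insertTab (rsP w) x := by
  simp [rsP]

lemma mem_rsP_flatten {w : List ℕ} {t : ℕ} : t ∈ (rsP w).flatten ↔ t ∈ w := by
  suffices (rsP w).flatten.Perm w from this.mem_iff
  induction w using List.reverseRecOn with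
  | nil => simp [rsP]
  | append_singleton w x ih =>
    rw [rsP_concat]
    exact (insertTab_flatten_perm _ x).trans
      ((ih.cons x).trans (List.perm_append_singleton x w).symm)

lemma rowStrict_rsP {w : List ℕ} (hw : w.Nodup) : RowStrict (rsP w) := by
  induction w using List.reverseRecOn with
  | nil => simp [rsP, RowStrict]
  | append_singleton w x ih =>
    rw [List.nodup_append] at hw
    rw [rsP_concat]
    exact (ih hw.1).insertTab fun h => hw.2.2 x (mem_rsP_flatten.1 h) x (by simp) rfl

/-! ### Knuth equivalence -/

inductive KnuthMove : List ℕ → List ℕ → Prop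
  | xzy {x y z : ℕ} : x < y → y < z → KnuthMove [x, z, y] [z, x, y]
  | yxz {x y z : ℕ} : x < y → y < z → KnuthMove [y, x, z] [y, z, x]

inductive KnuthStep : List ℕ → List ℕ → Prop
  | mk (u v : List ℕ) {w w' : List ℕ} :
      KnuthMove w w' → KnuthStep (u ++ w ++ v) (u ++ w' ++ v)

def KnuthEquiv : List ℕ → List ℕ → Prop := Relation.EqvGen KnuthStep

lemma KnuthMove.perm {w w' : List ℕ} (h : KnuthMove w w') : w.Perm w' := by
  cases h with
  | xzy => exact List.Perm.swap _ _ _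
  | yxz => exact (List.Perm.swap _ _ _).cons _

lemma KnuthStep.perm {a b : List ℕ} (h : KnuthStep a b) : a.Perm b := by
  cases h with
  | mk u v h => exact (h.perm.append_left u).append_right v

lemma KnuthMove.map {f : ℕ → ℕ} {s : Set ℕ} (hf : StrictMonoOn f s) {w w' : List ℕ}
    (h : KnuthMove w w') (hw : ∀ t ∈ w, t ∈ s) : KnuthMove (w.map f) (w'.map f) := by
  cases h with
  | xzy h₁ h₂ =>
    simp only [List.mem_cons, List.not_mem_nil, forall_eq_or_imp] at hw
    exact .xzy (hf hw.1 hw.2.2.1 h₁) (hf hw.2.2.1 hw.2.1 h₂)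
  | yxz h₁ h₂ =>
    simp only [List.mem_cons, List.not_mem_nil, forall_eq_or_imp] at hw
    exact .yxz (hf hw.2.1 hw.1 h₁) (hf hw.1 hw.2.2.1 h₂)

namespace KnuthEquiv

lemma refl (a : List ℕ) : KnuthEquiv a a := Relation.EqvGen.refl a

lemma symm {a b : List ℕ} (h : KnuthEquiv a b) : KnuthEquiv b a := Relation.EqvGen.symm _ _ h

lemma trans {a b c : List ℕ} (h₁ : KnuthEquiv a b) (h₂ : KnuthEquiv b c) : KnuthEquiv a c :=
  Relation.EqvGen.trans _ _ _ h₁ h₂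

lemma of_step {a b : List ℕ} (h : KnuthStep a b) : KnuthEquiv a b := Relation.EqvGen.rel _ _ h

lemma of_move {w w' : List ℕ} (h : KnuthMove w w') : KnuthEquiv w w' := by
  simpa using of_step (KnuthStep.mk [] [] h)

lemma perm {a b : List ℕ} (h : KnuthEquiv a b) : a.Perm b := by
  induction h with
  | rel _ _ h => exact h.perm
  | refl => exact List.Perm.refl _
  | symm _ _ _ ih => exact ih.symm
  | trans _ _ _ _ _ ih₁ ih₂ => exact ih₁.trans ih₂

lemma of_forall_step {f : List ℕ → List ℕ}
    (hf : ∀ a b, KnuthStep a b → KnuthEquiv (f a) (f b))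
    {a b : List ℕ} (h : KnuthEquiv a b) : KnuthEquiv (f a) (f b) := by
  induction h with
  | rel _ _ h => exact hf _ _ h
  | refl => exact refl _
  | symm _ _ _ ih => exact ih.symm
  | trans _ _ _ _ _ ih₁ ih₂ => exact ih₁.trans ih₂

lemma append_right {a b : List ℕ} (h : KnuthEquiv a b) (s : List ℕ) :
    KnuthEquiv (a ++ s) (b ++ s) := by
  refine of_forall_step (f := (· ++ s)) (fun a b hab => ?_) h
  obtain ⟨u, v, hm⟩ := hab
  simpa using of_step (KnuthStep.mk u (v ++ s) hm)

lemma append_left {a b : List ℕ} (h : KnuthEquiv a b) (s : List ℕ) :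
    KnuthEquiv (s ++ a) (s ++ b) := by
  refine of_forall_step (f := (s ++ ·)) (fun a b hab => ?_) h
  obtain ⟨u, v, hm⟩ := hab
  simpa using of_step (KnuthStep.mk (s ++ u) v hm)

lemma map {f : ℕ → ℕ} {s : Set ℕ} (hf : StrictMonoOn f s) {a b : List ℕ}
    (h : KnuthEquiv a b) (ha : ∀ t ∈ a, t ∈ s) : KnuthEquiv (a.map f) (b.map f) := by
  induction h with
  | rel a b hab =>
    obtain ⟨u, v, hm⟩ := hab
    simp only [List.mem_append] at ha
    simpa using
      of_step (KnuthStep.mk (u.map f) (v.map f) (hm.map hf fun t ht => ha t (by simp [ht])))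
  | refl => exact refl _
  | symm a b hab ih => exact (ih fun t ht => ha t ((perm hab).subset ht)).symm
  | trans a b c hab _ ih₁ ih₂ =>
    exact (ih₁ ha).trans (ih₂ fun t ht => ha t ((perm hab).symm.subset ht))

lemma filter {P : ℕ → Bool} (hP : ∀ ⦃x y z⦄, x < y → y < z → P x → P z → P y)
    {a b : List ℕ} (h : KnuthEquiv a b) : KnuthEquiv (a.filter P) (b.filter P) := by
  refine of_forall_step (f := (·.filter P)) (fun a b hab => ?_) h
  obtain ⟨u, v, hm⟩ := hab
  simp only [List.filter_append]
  refine (append_right (append_left ?_ _) _)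
  cases hm with
  | @xzy x y z h₁ h₂ =>
    by_cases hx : P x <;> by_cases hz : P z
    · simpa [hx, hz, hP h₁ h₂ hx hz] using of_move (.xzy h₁ h₂)
    all_goals
      simp only [List.filter_cons, List.filter_nil, hx, hz, Bool.false_eq_true, ↓reduceIte]
      exact refl _
  | @yxz x y z h₁ h₂ =>
    by_cases hx : P x <;> by_cases hz : P z
    · simpa [hx, hz, hP h₁ h₂ hx hz] using of_move (.yxz h₁ h₂)
    all_goals
      simp only [List.filter_cons, List.filter_nil, hx, hz, Bool.false_eq_true, ↓reduceIte]
      exact refl _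

lemma filter_lt {a b : List ℕ} (h : KnuthEquiv a b) (p : ℕ) :
    KnuthEquiv (a.filter (· < p)) (b.filter (· < p)) :=
  h.filter fun _ _ _ _ hyz _ hz => by simp only [decide_eq_true_eq] at hz ⊢; omega

lemma filter_le {a b : List ℕ} (h : KnuthEquiv a b) (p : ℕ) :
    KnuthEquiv (a.filter (p ≤ ·)) (b.filter (p ≤ ·)) :=
  h.filter fun _ _ _ hxy _ hx _ => by simp only [decide_eq_true_eq] at hx ⊢; omega

end KnuthEquiv

/-! ### The row word of an insertion tableau -/

lemma rword_cons (R : List ℕ) (rs : List (List ℕ)) : rword (R :: rs) = rword rs ++ R := by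
  simp [rword]

lemma knuthEquiv_cons_cons_append {e a : ℕ} (hae : a < e) :
    ∀ {B : List ℕ}, B.Pairwise (· < ·) → (∀ c ∈ B, e < c) →
      KnuthEquiv (e :: a :: B) (e :: (B ++ [a]))
  | [], _, _ => KnuthEquiv.refl _
  | c :: B, hB, heB => by
    rw [List.pairwise_cons] at hB
    have hec := heB c (by simp)
    have hmove : KnuthEquiv (e :: a :: c :: B) (e :: c :: a :: B) := by
      simpa using (KnuthEquiv.of_move (.yxz hae hec)).append_right B
    exact hmove.trans (by
      simpa using (knuthEquiv_cons_cons_append (hae.trans hec) hB.2 hB.1).append_left [e])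

lemma knuthEquiv_cons_append {a b : ℕ} (hab : a < b) (B : List ℕ) :
    ∀ {A : List ℕ}, A.Pairwise (· < ·) → (∀ c ∈ A, c < a) →
      KnuthEquiv (b :: (A ++ a :: B)) (A ++ b :: a :: B)
  | [], _, _ => KnuthEquiv.refl _
  | c :: A, hA, hAa => by
    rw [List.pairwise_cons] at hA
    have hca := hAa c (by simp)
    have hmove : KnuthEquiv (b :: c :: (A ++ a :: B)) (c :: b :: (A ++ a :: B)) := by
      obtain ⟨d, D, hd, hcd, hdb⟩ : ∃ d D, A ++ a :: B = d :: D ∧ c < d ∧ d < b := by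
        cases A with
        | nil => exact ⟨a, B, rfl, hca, hab⟩
        | cons d A =>
          exact ⟨d, A ++ a :: B, rfl, hA.1 d (by simp), ((hAa d (by simp)).trans hab)⟩
      rw [hd]
      simpa using ((KnuthEquiv.of_move (.xzy hcd hdb)).append_right D).symm
    exact hmove.trans (by
      simpa using
        (knuthEquiv_cons_append hab B hA.2 fun d hd => hAa d (by simp [hd])).append_left [c])

-- Inserting `x` into the row `A ++ b :: B` bumps `b`: the row followed by `x` is Knuth
-- equivalent to `b` followed by the new row.
lemma knuthEquiv_bump {A B : List ℕ} {x b : ℕ} (hR : (A ++ b :: B).Pairwise (· < ·))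
    (hAx : ∀ a ∈ A, a < x) (hxb : x < b) :
    KnuthEquiv (b :: (A ++ x :: B)) (A ++ b :: B ++ [x]) := by
  rw [List.pairwise_append, List.pairwise_cons] at hR
  refine (knuthEquiv_cons_append hxb B hR.1 hAx).trans ?_
  simpa using (knuthEquiv_cons_cons_append hxb hR.2.1.2 hR.2.1.1).append_left A

lemma knuthEquiv_rword_insertTab {T : List (List ℕ)} (hT : RowStrict T) {x : ℕ}
    (hx : x ∉ T.flatten) : KnuthEquiv (rword T ++ [x]) (rword (insertTab T x)) := by
  induction T generalizing x with
  | nil => exact KnuthEquiv.refl _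
  | cons R rs ih =>
    have hR := hT.1 R (by simp)
    obtain ⟨A, B, rfl, hA, hB⟩ := exists_split_of_sorted x hR
    have hAx : ∀ a ∈ A, a < x := fun a ha =>
      lt_of_le_of_ne (hA a ha) (by rintro rfl; exact hx (by simp [ha]))
    rw [insertTab_cons, insertRow_split hA hB]
    cases B with
    | nil => simpa [rword_cons] using KnuthEquiv.refl _
    | cons b B =>
      have hrest := (ih hT.tail (hT.not_mem_tail (t := b) (by simp))).append_right (A ++ x :: B)
      simp only [rword_cons, List.head?_cons, List.tail_cons, Option.toList_some,
        List.foldl_cons, List.foldl_nil]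
      rw [List.append_assoc]
      refine ((knuthEquiv_bump hR hAx (hB b (by simp))).symm.append_left (rword rs)).trans ?_
      simpa using hrest

lemma knuthEquiv_rword_rsP {w : List ℕ} (hw : w.Nodup) : KnuthEquiv w (rword (rsP w)) := by
  induction w using List.reverseRecOn with
  | nil => exact KnuthEquiv.refl _
  | append_singleton w x ih =>
    rw [List.nodup_append] at hw
    rw [rsP_concat]
    refine ((ih hw.1).append_right [x]).trans (knuthEquiv_rword_insertTab (rowStrict_rsP hw.1) ?_)
    exact fun h => hw.2.2 x (mem_rsP_flatten.1 h) x (by simp) rfl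

/-! ### Knuth moves do not change the insertion tableau -/

def rowInsert (R : List ℕ) : List ℕ → List ℕ × List ℕ
  | [] => (R, [])
  | x :: w =>
    ((rowInsert (insertRow x R).1 w).1,
      (insertRow x R).2.toList ++ (rowInsert (insertRow x R).1 w).2)

lemma foldl_insertTab_cons (w R : List ℕ) (rs : List (List ℕ)) :
    w.foldl insertTab (R :: rs) = (rowInsert R w).1 :: (rowInsert R w).2.foldl insertTab rs := by
  induction w generalizing R rs with
  | nil => rfl
  | cons x w ih => simp [rowInsert, insertTab_cons, ih, List.foldl_append]

lemma mem_rowInsert_snd {R w : List ℕ} {t : ℕ} (ht : t ∈ (rowInsert R w).2) :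
    t ∈ R ∨ t ∈ w := by
  induction w generalizing R with
  | nil => simp [rowInsert] at ht
  | cons x w ih =>
    simp only [rowInsert, List.mem_append] at ht
    rcases ht with ht | ht
    · exact .inl (List.mem_of_find?_eq_some (insertRow_snd x R ▸ Option.mem_toList.1 ht))
    · rcases ih ht with ht | ht
      · rcases List.mem_cons.1 ((insertRow_perm x R).subset (List.mem_append_left _ ht)) with
          rfl | ht
        · simp
        · exact .inl ht
      · simp [ht]

lemma rowInsert_xzy {R : List ℕ} (hR : R.Pairwise (· < ·)) {x y z : ℕ} (hxy : x < y)
    (hyz : y < z) (hz : z ∉ R) :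
    ∃ S γ γ', rowInsert R [x, z, y] = (S, γ) ∧ rowInsert R [z, x, y] = (S, γ') ∧
      (γ = γ' ∨ KnuthMove γ γ' ∨ KnuthMove γ' γ) := by
  obtain ⟨A, B, rfl, hA, hB⟩ := exists_split_of_sorted x hR
  rcases B with _ | ⟨b, B⟩
  · refine ⟨A ++ [x, y], [z], [z], ?_, ?_, .inl rfl⟩ <;>
      simp (disch := omega) [rowInsert, insertRow_append_of_le _ hA, insertRow_of_le hA,
        insertRow_cons_of_lt, insertRow_cons_of_le, insertRow_nil]
  have hxb : x < b := hB b (by simp)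
  have hbB : ∀ c ∈ B, b < c := (List.pairwise_cons.1 (List.pairwise_append.1 hR).2.1).1
  have hBs : B.Pairwise (· < ·) := (List.pairwise_cons.1 (List.pairwise_append.1 hR).2.1).2
  rcases lt_or_gt_of_ne (show b ≠ z by rintro rfl; exact hz (by simp)) with hbz | hzb
  · -- `x` and `z` bump different letters, so they commute; `y` then bumps the same letter
    obtain ⟨C, D, rfl, hC, hD⟩ := exists_split_of_sorted z hBs
    obtain ⟨C₁, C₂, rfl, hC₁, hC₂⟩ :=
      exists_split_of_sorted y (List.pairwise_append.1 hBs).1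
    rcases C₂ with _ | ⟨c, C₂⟩ <;> rcases D with _ | ⟨d, D⟩
    · refine ⟨A ++ x :: (C₁ ++ [y]), [b, z], [b, z], ?_, ?_, .inl rfl⟩ <;>
        simp (disch := omega) [rowInsert, insertRow_append_of_le _ hA,
          insertRow_append_of_le _ hC₁, insertRow_of_le hC₁, insertRow_cons_of_lt,
          insertRow_cons_of_le]
    · have hzd : z < d := hD d (by simp)
      refine ⟨A ++ x :: (C₁ ++ y :: D), [b, d, z], [d, b, z], ?_, ?_,
        .inr (.inl (.xzy hbz hzd))⟩
        <;> simp (disch := omega) [rowInsert, insertRow_append_of_le _ hA,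
          insertRow_append_of_le _ hC₁, insertRow_cons_of_lt, insertRow_cons_of_le]
    · have hyc : y < c := hC₂ c (by simp)
      have hcz : c ≤ z := hC c (by simp)
      have hC₂z : ∀ t ∈ C₂, t ≤ z := fun t ht => hC t (by simp [ht])
      refine ⟨A ++ x :: (C₁ ++ y :: (C₂ ++ [z])), [b, c], [b, c], ?_, ?_, .inl rfl⟩ <;>
        simp (disch := omega) [rowInsert, insertRow_append_of_le _ hA,
          insertRow_append_of_le _ hC₁, insertRow_of_le hC₂z, insertRow_cons_of_lt,
          insertRow_cons_of_le]
    · have hyc : y < c := hC₂ c (by simp)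
      have hcz : c ≤ z := hC c (by simp)
      have hC₂z : ∀ t ∈ C₂, t ≤ z := fun t ht => hC t (by simp [ht])
      have hzd : z < d := hD d (by simp)
      have hbc : b < c := hbB c (by simp)
      refine ⟨A ++ x :: (C₁ ++ y :: (C₂ ++ z :: D)), [b, d, c], [d, b, c], ?_, ?_,
        .inr (.inl (.xzy hbc (lt_of_le_of_lt hcz hzd)))⟩ <;>
        simp (disch := omega) [rowInsert, insertRow_append_of_le _ hA,
          insertRow_append_of_le _ hC₁, insertRow_append_of_le _ hC₂z, insertRow_cons_of_lt,
          insertRow_cons_of_le]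
  · rcases B with _ | ⟨c, B⟩
    · refine ⟨A ++ [x, y], [b, z], [b, z], ?_, ?_, .inl rfl⟩ <;>
        simp (disch := omega) [rowInsert, insertRow_append_of_le _ hA, insertRow_cons_of_lt,
          insertRow_cons_of_le, insertRow_nil]
    · have hbc : b < c := hbB c (by simp)
      refine ⟨A ++ x :: y :: B, [b, c, z], [b, z, c], ?_, ?_, .inr (.inr (.yxz hzb hbc))⟩ <;>
        simp (disch := omega) [rowInsert, insertRow_append_of_le _ hA, insertRow_cons_of_lt,
          insertRow_cons_of_le]

lemma rowInsert_yxz {R : List ℕ} (hR : R.Pairwise (· < ·)) {x y z : ℕ} (hxy : x < y)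
    (hyz : y < z) :
    ∃ S γ γ', rowInsert R [y, x, z] = (S, γ) ∧ rowInsert R [y, z, x] = (S, γ') ∧
      (γ = γ' ∨ KnuthMove γ γ' ∨ KnuthMove γ' γ) := by
  obtain ⟨A, B, rfl, hA, hB⟩ := exists_split_of_sorted y hR
  obtain ⟨A₁, A₂, rfl, hA₁, hA₂⟩ :=
    exists_split_of_sorted x (List.pairwise_append.1 hR).1
  have hA₂y : ∀ t ∈ A₂, t ≤ y := fun t ht => hA t (by simp [ht])
  -- once `y` is inserted, `x` bumps `a`, and `x`, `z` commute since `a ≤ y < z`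
  obtain ⟨a, W, hW⟩ := List.exists_cons_of_ne_nil
    (List.append_ne_nil_of_right_ne_nil A₂ (List.cons_ne_nil y []))
  have hWy : ∀ t ∈ a :: W, t ≤ y := by
    rw [← hW]
    intro t ht
    rcases List.mem_append.1 ht with ht | ht
    · exact hA₂y t ht
    · exact (List.mem_singleton.1 ht).le
  have hxa : x < a := by
    rcases List.mem_append.1 (hW ▸ List.mem_cons_self : a ∈ A₂ ++ [y]) with ha | ha
    · exact hA₂ a ha
    · simpa [List.mem_singleton.1 ha] using hxy
  have hay : a ≤ y := hWy a (by simp)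
  have hW' : ∀ t ∈ W, t ≤ y := fun t ht => hWy t (by simp [ht])
  have hWL : ∀ L, A₂ ++ y :: L = a :: (W ++ L) := fun L => by
    simpa using congrArg (· ++ L) hW
  rcases B with _ | ⟨b, B⟩
  · refine ⟨A₁ ++ x :: (W ++ [z]), [a], [a], ?_, ?_, .inl rfl⟩ <;>
      simp (disch := omega) [rowInsert, insertRow_append_of_le _ hA₁, insertRow_of_le hA₂y,
        insertRow_of_le hW', hWL, insertRow_cons_of_lt, insertRow_cons_of_le]
  have hyb : y < b := hB b (by simp)
  have hbB : ∀ c ∈ B, b < c := (List.pairwise_cons.1 (List.pairwise_append.1 hR).2.1).1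
  have hBs : B.Pairwise (· < ·) := (List.pairwise_cons.1 (List.pairwise_append.1 hR).2.1).2
  obtain ⟨E, F, rfl, hE, hF⟩ := exists_split_of_sorted z hBs
  rcases F with _ | ⟨f, F⟩
  · refine ⟨A₁ ++ x :: (W ++ (E ++ [z])), [b, a], [b, a], ?_, ?_, .inl rfl⟩ <;>
      simp (disch := omega) [rowInsert, insertRow_append_of_le _ hA₁,
        insertRow_append_of_le _ hA₂y, insertRow_append_of_le _ hW', hWL, insertRow_of_le hE,
        insertRow_cons_of_lt, insertRow_cons_of_le]
  · have hzf : z < f := hF f (by simp)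
    have hbf : b < f := hbB f (by simp)
    refine ⟨A₁ ++ x :: (W ++ (E ++ z :: F)), [b, a, f], [b, f, a], ?_, ?_,
      .inr (.inl (.yxz (lt_of_le_of_lt hay hyb) hbf))⟩ <;>
      simp (disch := omega) [rowInsert, insertRow_append_of_le _ hA₁,
        insertRow_append_of_le _ hA₂y, insertRow_append_of_le _ hW', hWL,
        insertRow_append_of_le _ hE, insertRow_cons_of_lt, insertRow_cons_of_le]

lemma KnuthMove.foldl_insertTab {T : List (List ℕ)} (hT : RowStrict T) {w w' : List ℕ}
    (h : KnuthMove w w') (hw : ∀ t ∈ w, t ∉ T.flatten) :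
    w.foldl insertTab T = w'.foldl insertTab T := by
  induction T generalizing w w' with
  | nil =>
    cases h <;>
      simp (disch := omega) [insertTab, insertRow_cons_of_lt, insertRow_cons_of_le, insertRow_nil]
  | cons R rs ih =>
    have hR := hT.1 R (by simp)
    obtain ⟨S, γ, γ', h₁, h₂, hγ⟩ :
        ∃ S γ γ', rowInsert R w = (S, γ) ∧ rowInsert R w' = (S, γ') ∧
        (γ = γ' ∨ KnuthMove γ γ' ∨ KnuthMove γ' γ) := by
      cases h with
      | @xzy x y z h₁ h₂ =>
        exact rowInsert_xzy hR h₁ h₂ fun hz =>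
          hw z (by simp) (List.mem_flatten.2 ⟨R, by simp, hz⟩)
      | yxz h₁ h₂ => exact rowInsert_yxz hR h₁ h₂
    have hfresh : ∀ v, v.Perm w → ∀ t ∈ (rowInsert R v).2, t ∉ rs.flatten := by
      intro v hv t ht
      rcases mem_rowInsert_snd ht with htR | htv
      · exact hT.not_mem_tail htR
      · exact fun hts => hw t (hv.subset htv) (by simp [hts])
    have hγ₁ : ∀ t ∈ γ, t ∉ rs.flatten := by simpa [h₁] using hfresh w (.refl w)
    have hγ₂ : ∀ t ∈ γ', t ∉ rs.flatten := by simpa [h₂] using hfresh w' h.perm.symm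
    rw [foldl_insertTab_cons, foldl_insertTab_cons, h₁, h₂]
    congr 1
    rcases hγ with rfl | hγ | hγ
    · rfl
    · exact ih hT.tail hγ hγ₁
    · exact (ih hT.tail hγ hγ₂).symm

lemma KnuthStep.rsP_eq {a b : List ℕ} (h : KnuthStep a b) (ha : a.Nodup) : rsP a = rsP b := by
  obtain ⟨u, v, hm⟩ := h
  simp only [rsP_append]
  congr 1
  simp only [List.nodup_append] at ha
  exact hm.foldl_insertTab (rowStrict_rsP ha.1.1) fun t ht htu =>
    ha.1.2.2 t (mem_rsP_flatten.1 htu) t ht rfl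

lemma KnuthEquiv.rsP_eq {a b : List ℕ} (h : KnuthEquiv a b) (ha : a.Nodup) : rsP a = rsP b := by
  induction h with
  | rel _ _ h => exact h.rsP_eq ha
  | refl => rfl
  | symm _ _ hab ih => exact (ih ((perm hab).nodup_iff.2 ha)).symm
  | trans _ _ _ hab _ ih₁ ih₂ => exact (ih₁ ha).trans (ih₂ ((perm hab).nodup_iff.1 ha))

theorem rsP_eq_iff_knuthEquiv {a b : List ℕ} (ha : a.Nodup) (hb : b.Nodup) :
    rsP a = rsP b ↔ KnuthEquiv a b := by
  refine ⟨fun h => ?_, fun h => h.rsP_eq ha⟩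
  have hb' := knuthEquiv_rword_rsP hb
  rw [← h] at hb'
  exact (knuthEquiv_rword_rsP ha).trans hb'.symm

/-! ### Permutation words and standardization -/

lemma isPermWord_of_perm_range {w : List ℕ} {n : ℕ} (h : w.Perm (List.range n)) :
    IsPermWord w := by
  rwa [IsPermWord, show w.length = n by simpa using h.length_eq]

lemma IsPermWord.nodup {w : List ℕ} (h : IsPermWord w) : w.Nodup :=
  h.nodup_iff.2 List.nodup_range

lemma IsPermWord.mem_iff {w : List ℕ} (h : IsPermWord w) {t : ℕ} :
    t ∈ w ↔ t < w.length := by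
  rw [List.Perm.mem_iff h, List.mem_range]

lemma range_filter_lt (p n : ℕ) : (List.range n).filter (· < p) = List.range (min p n) := by
  rcases le_total n p with h | h
  · rw [min_eq_right h, List.filter_eq_self]
    intro t ht
    simpa using lt_of_lt_of_le (List.mem_range.1 ht) h
  · obtain ⟨k, rfl⟩ := Nat.exists_eq_add_of_le h
    rw [min_eq_left h, List.range_add, List.filter_append, List.filter_eq_self.2,
      List.filter_eq_nil_iff.2, List.append_nil]
    · simp
    · intro t ht
      simpa using List.mem_range.1 ht

lemma range_filter_le (p n : ℕ) : (List.range n).filter (p ≤ ·) = List.range' p (n - p) := by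
  rcases le_total n p with h | h
  · rw [Nat.sub_eq_zero_of_le h, List.range'_zero, List.filter_eq_nil_iff]
    intro t ht
    simpa using lt_of_lt_of_le (List.mem_range.1 ht) h
  · obtain ⟨k, rfl⟩ := Nat.exists_eq_add_of_le h
    rw [List.range_add, List.filter_append, List.filter_eq_nil_iff.2, List.filter_eq_self.2,
      List.range'_eq_map_range]
    · simp
    · simp
    · intro t ht
      simpa using List.mem_range.1 ht

lemma IsPermWord.filter_lt_perm {w : List ℕ} (h : IsPermWord w) (p : ℕ) :
    (w.filter (· < p)).Perm (List.range (min p w.length)) := by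
  simpa [range_filter_lt] using h.filter (· < p)

lemma IsPermWord.filter_lt {w : List ℕ} (h : IsPermWord w) (p : ℕ) :
    IsPermWord (w.filter (· < p)) :=
  isPermWord_of_perm_range (h.filter_lt_perm p)

lemma IsPermWord.filter_le_perm {w : List ℕ} (h : IsPermWord w) (p : ℕ) :
    (w.filter (p ≤ ·)).Perm (List.range' p (w.length - p)) := by
  simpa [range_filter_le] using h.filter (p ≤ ·)

lemma IsPermWord.filter_le_sub_perm {w : List ℕ} (h : IsPermWord w) (p : ℕ) :
    ((w.filter (p ≤ ·)).map (· - p)).Perm (List.range (w.length - p)) := by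
  simpa [List.range'_eq_map_range, Function.comp_def] using (h.filter_le_perm p).map (· - p)

lemma IsPermWord.filter_le_sub {w : List ℕ} (h : IsPermWord w) (p : ℕ) :
    IsPermWord ((w.filter (p ≤ ·)).map (· - p)) :=
  isPermWord_of_perm_range (h.filter_le_sub_perm p)

lemma IsPermWord.triangle {u v : List ℕ} (hu : IsPermWord u) (hv : IsPermWord v) :
    IsPermWord (triangle v u) := by
  refine isPermWord_of_perm_range (n := u.length + v.length) ?_
  rw [_root_.triangle, List.range_add]
  refine List.perm_append_comm.trans (List.Perm.append hu ?_)
  simpa [add_comm] using hv.map (· + u.length)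

lemma stW_eq_map_sub {w : List ℕ} {c m : ℕ} (h : w.Perm (List.range' c m)) :
    stW w = w.map (· - c) := by
  refine List.map_congr_left fun x hx => ?_
  obtain ⟨i, hi, rfl⟩ : ∃ i < m, c + i = x := by
    simpa [List.range'_eq_map_range] using h.subset hx
  rw [(h.filter _).length_eq, List.range'_eq_map_range, List.filter_map]
  have : ((· < c + i) ∘ (c + ·) : ℕ → Bool) = (· < i) := by funext j; simp
  simp [this, range_filter_lt, hi.le]

lemma stW_eq_self {w : List ℕ} (h : IsPermWord w) : stW w = w := by
  simpa using stW_eq_map_sub (c := 0) (m := w.length) (List.range_eq_range' ▸ h)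

lemma filter_lt_triangle {u : List ℕ} (hu : IsPermWord u) (v : List ℕ) :
    (triangle v u).filter (· < u.length) = u := by
  rw [triangle, List.filter_append, List.filter_eq_nil_iff.2, List.filter_eq_self.2]
  · simp
  · intro t ht
    simpa using hu.mem_iff.1 ht
  · simp

lemma filter_le_triangle {u : List ℕ} (hu : IsPermWord u) (v : List ℕ) :
    ((triangle v u).filter (u.length ≤ ·)).map (· - u.length) = v := by
  have hv : ∀ t ∈ v.map (· + u.length), decide (u.length ≤ t) = true := by simp
  have hu' : ∀ t ∈ u, ¬ decide (u.length ≤ t) = true := fun t ht => by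
    simpa using hu.mem_iff.1 ht
  rw [triangle, List.filter_append, List.filter_eq_self.2 hv, List.filter_eq_nil_iff.2 hu']
  simp [Function.comp_def]

/-! ### The right weak order -/

lemma pair_sublist_iff {a b : ℕ} {w : List ℕ} :
    [a, b].Sublist w ↔ ∃ k l : ℕ, k < l ∧ w[k]? = some a ∧ w[l]? = some b := by
  have h := not_congr ((List.pairwise_iff_forall_sublist (R := fun s t => ¬ (s = a ∧ t = b))
    (l := w)).symm.trans List.pairwise_iff_getElem)
  push Not at h
  refine ⟨fun hab => ?_, fun ⟨k, l, hkl, hk, hl⟩ => ?_⟩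
  · obtain ⟨k, l, hk, hl, hkl, rfl, rfl⟩ := h.1 ⟨a, b, hab, rfl, rfl⟩
    exact ⟨k, l, hkl, by simp [hk], by simp [hl]⟩
  · obtain ⟨hk', rfl⟩ := List.getElem?_eq_some_iff.1 hk
    obtain ⟨hl', rfl⟩ := List.getElem?_eq_some_iff.1 hl
    obtain ⟨s, t, hst, rfl, rfl⟩ := h.2 ⟨k, l, hk', hl', hkl, rfl, rfl⟩
    exact hst

lemma mem_invSet {w : List ℕ} {a b : ℕ} :
    (a, b) ∈ invSet w ↔ b < a ∧ [a, b].Sublist w := by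
  rw [invSet, Set.mem_ofPred_eq, pair_sublist_iff]

lemma pair_sublist_append_iff {a b : ℕ} {l₁ l₂ : List ℕ} :
    [a, b].Sublist (l₁ ++ l₂) ↔
      [a, b].Sublist l₁ ∨ (a ∈ l₁ ∧ b ∈ l₂) ∨ [a, b].Sublist l₂ := by
  refine ⟨fun h => ?_, ?_⟩
  · obtain ⟨m₁, m₂, hm, h₁, h₂⟩ := List.sublist_append_iff.1 h
    rcases m₁ with _ | ⟨a', _ | ⟨b', _ | _⟩⟩
    · exact .inr (.inr (by simpa [hm] using h₂))
    · obtain ⟨rfl, rfl⟩ : a = a' ∧ [b] = m₂ := by simpa using hm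
      exact .inr (.inl ⟨List.singleton_sublist.1 h₁, List.singleton_sublist.1 h₂⟩)
    · obtain ⟨rfl, rfl, rfl⟩ : a = a' ∧ b = b' ∧ m₂ = [] := by simpa [eq_comm] using hm
      exact .inl h₁
    · simp at hm
  · rintro (h | ⟨ha, hb⟩ | h)
    · exact h.trans (List.sublist_append_left _ _)
    · exact List.singleton_sublist.2 ha |>.append (List.singleton_sublist.2 hb)
    · exact h.trans (List.sublist_append_right _ _)

lemma weakLe_refl (w : List ℕ) : weakLe w w := subset_rfl

lemma weakLe.filter {x y : List ℕ} (h : weakLe x y) (P : ℕ → Bool) :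
    weakLe (x.filter P) (y.filter P) := by
  rintro ⟨a, b⟩ hab
  rw [mem_invSet] at hab ⊢
  have hP : P a ∧ P b :=
    ⟨(List.mem_filter.1 (hab.2.subset (by simp))).2,
      (List.mem_filter.1 (hab.2.subset (by simp))).2⟩
  have hy := (mem_invSet.1 (h (mem_invSet.2 ⟨hab.1, hab.2.trans List.filter_sublist⟩))).2
  exact ⟨hab.1, by simpa [hP] using hy.filter P⟩

lemma weakLe.map {f : ℕ → ℕ} {s : Set ℕ} (hf : StrictMonoOn f s) {x y : List ℕ}
    (h : weakLe x y) (hx : ∀ t ∈ x, t ∈ s) : weakLe (x.map f) (y.map f) := by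
  rintro ⟨a, b⟩ hab
  rw [mem_invSet] at hab ⊢
  obtain ⟨l, hl, hlab⟩ := List.sublist_map_iff.1 hab.2
  obtain ⟨a', b', rfl⟩ : ∃ a' b', l = [a', b'] := by
    rcases l with _ | ⟨a', _ | ⟨b', _ | _⟩⟩ <;> simp at hlab
    exact ⟨a', b', rfl⟩
  obtain ⟨rfl, rfl⟩ : a = f a' ∧ b = f b' := by simpa using hlab
  have hba : b' < a' :=
    (hf.lt_iff_lt (hx b' (hl.subset (by simp))) (hx a' (hl.subset (by simp)))).1 hab.1
  exact ⟨hab.1, by simpa using ((mem_invSet.1 (h (mem_invSet.2 ⟨hba, hl⟩))).2.map f)⟩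

lemma weakLe_append {x y z w : List ℕ} (hxy : weakLe x y) (hx : ∀ t ∈ x, t ∈ y)
    (hzw : weakLe z w) (hz : ∀ t ∈ z, t ∈ w) : weakLe (x ++ z) (y ++ w) := by
  rintro ⟨a, b⟩ hab
  rw [mem_invSet, pair_sublist_append_iff] at hab ⊢
  refine ⟨hab.1, ?_⟩
  rcases hab.2 with h | ⟨ha, hb⟩ | h
  · exact .inl (mem_invSet.1 (hxy (mem_invSet.2 ⟨hab.1, h⟩))).2
  · exact .inr (.inl ⟨hx a ha, hz b hb⟩)
  · exact .inr (.inr (mem_invSet.1 (hzw (mem_invSet.2 ⟨hab.1, h⟩))).2)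

lemma weakLe_append_of_forall_lt {w z : List ℕ} (hz : z.Pairwise (· < ·))
    (hwz : ∀ t ∈ w, ∀ s ∈ z, t < s) : weakLe (w ++ z) w := by
  rintro ⟨a, b⟩ hab
  rw [mem_invSet, pair_sublist_append_iff] at hab
  rw [mem_invSet]
  rcases hab with ⟨hba, h | ⟨ha, hb⟩ | h⟩
  · exact ⟨hba, h⟩
  · exact absurd (hwz a ha b hb) (not_lt.2 hba.le)
  · exact absurd (List.pairwise_iff_forall_sublist.1 hz h) (not_lt.2 hba.le)

lemma weakLe_filter_append_filter (σ : List ℕ) (p : ℕ) :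
    weakLe σ (σ.filter (p ≤ ·) ++ σ.filter (· < p)) := by
  rintro ⟨a, b⟩ hab
  rw [mem_invSet] at hab
  rw [mem_invSet, pair_sublist_append_iff]
  refine ⟨hab.1, ?_⟩
  by_cases hb : p ≤ b
  · exact .inl (by simpa [hb, hb.trans hab.1.le] using hab.2.filter (p ≤ ·))
  by_cases ha : a < p
  · exact .inr (.inr (by simpa [ha, hab.1.trans ha] using hab.2.filter (· < p)))
  · exact .inr (.inl ⟨List.mem_filter.2 ⟨hab.2.subset (by simp), by simpa using ha⟩,
      List.mem_filter.2 ⟨hab.2.subset (by simp), by simpa using hb⟩⟩)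

-- A Taskin chain may pass through permutations of other sizes; `resize n` brings a permutation
-- word to size `n`, keeping its inversions among letters `< n` and adding none.
def resize (n : ℕ) (w : List ℕ) : List ℕ :=
  w.filter (· < n) ++ List.range' (w.filter (· < n)).length (n - (w.filter (· < n)).length)

lemma IsPermWord.resize {w : List ℕ} (h : IsPermWord w) (n : ℕ) :
    IsPermWord (resize n w) ∧ (resize n w).length = n := by
  have hf := h.filter_lt_perm n
  have hlen : (w.filter (· < n)).length = min n w.length := by simpa using hf.length_eq
  have hperm : (_root_.resize n w).Perm (List.range n) := by
    rw [_root_.resize, hlen]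
    refine (hf.append_right _).trans ?_
    rw [List.range'_eq_map_range, ← List.range_add, Nat.add_sub_cancel' (min_le_left _ _)]
  exact ⟨isPermWord_of_perm_range hperm, by simpa using hperm.length_eq⟩

lemma resize_eq_self {w : List ℕ} (h : IsPermWord w) : resize w.length w = w := by
  have : w.filter (· < w.length) = w := List.filter_eq_self.2 fun t ht => by
    simpa using h.mem_iff.1 ht
  simp [resize, this]

lemma weakLe.resize {x y : List ℕ} (hx : IsPermWord x) (h : weakLe x y) (n : ℕ) :
    weakLe (resize n x) (resize n y) := by
  have hpad : ∀ w : List ℕ, IsPermWord w →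
      weakLe (_root_.resize n w) (w.filter (· < n)) := by
    intro w hw
    refine weakLe_append_of_forall_lt (List.pairwise_lt_range' 1) fun t ht s hs => ?_
    have ht' := (hw.filter_lt_perm n).mem_iff.1 ht
    have hlen : (w.filter (· < n)).length = min n w.length := by
      simpa using (hw.filter_lt_perm n).length_eq
    rw [hlen] at hs
    simp only [List.mem_range, List.mem_range'_1] at ht' hs
    omega
  refine Set.Subset.trans (hpad x hx) (Set.Subset.trans (h.filter _) fun pr hpr => ?_)
  rw [mem_invSet] at hpr ⊢
  exact ⟨hpr.1, hpr.2.trans (List.sublist_append_left _ _)⟩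

lemma KnuthEquiv.resize {x y : List ℕ} (h : KnuthEquiv x y) (n : ℕ) :
    KnuthEquiv (resize n x) (resize n y) := by
  have hf := h.filter_lt n
  rw [_root_.resize, _root_.resize, hf.perm.length_eq]
  exact hf.append_right _

/-! ### Monotonicity of word operations for the Taskin order -/

lemma taskinLe_of_weakLe {u v : List ℕ} (hu : IsPermWord u) (hv : IsPermWord v)
    (h : weakLe u v) : taskinLe (rsP u) (rsP v) :=
  Relation.ReflTransGen.single ⟨u, v, hu, hv, rfl, rfl, h⟩

lemma taskinLe_map {F : List ℕ → List ℕ} (hperm : ∀ w, IsPermWord w → IsPermWord (F w))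
    (hweak : ∀ x y, IsPermWord x → IsPermWord y → weakLe x y → weakLe (F x) (F y))
    (hknuth : ∀ x y, KnuthEquiv x y → KnuthEquiv (F x) (F y))
    {a b : List ℕ} (ha : IsPermWord a) (hb : IsPermWord b) (h : taskinLe (rsP a) (rsP b)) :
    taskinLe (rsP (F a)) (rsP (F b)) := by
  have hcongr :
      ∀ x y, IsPermWord x → IsPermWord y → rsP x = rsP y → rsP (F x) = rsP (F y) :=
    fun x y hx hy hxy =>
      (hknuth x y ((rsP_eq_iff_knuthEquiv hx.nodup hy.nodup).1 hxy)).rsP_eq (hperm x hx).nodup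
  suffices ∀ T, taskinLe (rsP a) T → ∀ b, IsPermWord b → rsP b = T →
      taskinLe (rsP (F a)) (rsP (F b)) from this _ h b hb rfl
  intro T hT
  induction hT with
  | refl =>
    intro b hb hab
    rw [hcongr a b ha hb hab.symm]
    exact .refl
  | tail _ hstep ih =>
    intro b hb hTb
    obtain ⟨u, v, hu, hv, rfl, rfl, huv⟩ := hstep
    rw [← hcongr v b hv hb hTb.symm]
    exact (ih u hu rfl).tail ⟨F u, F v, hperm u hu, hperm v hv, rfl, rfl, hweak u v hu hv huv⟩

lemma taskinLe_filter_lt {a b : List ℕ} (ha : IsPermWord a) (hb : IsPermWord b)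
    (h : taskinLe (rsP a) (rsP b)) (p : ℕ) :
    taskinLe (rsP (a.filter (· < p))) (rsP (b.filter (· < p))) :=
  taskinLe_map (F := (·.filter (· < p))) (fun _ hw => hw.filter_lt p)
    (fun _ _ _ _ hxy => hxy.filter _)
    (fun _ _ hxy => hxy.filter_lt p) ha hb h

lemma strictMonoOn_sub (p : ℕ) : StrictMonoOn (· - p) {t | p ≤ t} :=
  fun a (ha : p ≤ a) b (hb : p ≤ b) hab => show a - p < b - p by omega

lemma taskinLe_filter_le_sub {a b : List ℕ} (ha : IsPermWord a) (hb : IsPermWord b)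
    (h : taskinLe (rsP a) (rsP b)) (p : ℕ) :
    taskinLe (rsP ((a.filter (p ≤ ·)).map (· - p)))
      (rsP ((b.filter (p ≤ ·)).map (· - p))) := by
  have hmem : ∀ x : List ℕ, ∀ t ∈ x.filter (p ≤ ·), t ∈ {t | p ≤ t} :=
    fun _ t ht => by simpa using (List.mem_filter.1 ht).2
  exact taskinLe_map (F := fun w => (w.filter (p ≤ ·)).map (· - p))
    (fun _ hw => hw.filter_le_sub p)
    (fun x _ _ _ hxy => (hxy.filter _).map (strictMonoOn_sub p) (hmem x))
    (fun x _ hxy => (hxy.filter_le p).map (strictMonoOn_sub p) (hmem x)) ha hb h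

lemma strictMonoOn_add (k : ℕ) : StrictMonoOn (· + k) Set.univ :=
  fun _ _ _ _ hab => Nat.add_lt_add_right hab k

lemma IsPermWord.mem_resize_iff {x y : List ℕ} (hx : IsPermWord x) (hy : IsPermWord y) (n : ℕ)
    {t : ℕ} : t ∈ _root_.resize n x ↔ t ∈ _root_.resize n y := by
  rw [(hx.resize n).1.mem_iff, (hy.resize n).1.mem_iff, (hx.resize n).2, (hy.resize n).2]

lemma taskinLe_triangle_left {v v' u : List ℕ} (hv : IsPermWord v) (hv' : IsPermWord v')
    (hu : IsPermWord u) (hlen : v'.length = v.length) (h : taskinLe (rsP v) (rsP v')) :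
    taskinLe (rsP (triangle v u)) (rsP (triangle v' u)) := by
  have := taskinLe_map (F := fun w => triangle (resize v.length w) u)
    (fun w hw => hu.triangle (hw.resize _).1)
    (fun x y hx hy hxy => weakLe_append
      ((hxy.resize hx _).map (strictMonoOn_add _) (by simp))
      (by simp [hx.mem_resize_iff hy]) (weakLe_refl u) (fun _ => id))
    (fun _ _ hxy => ((hxy.resize _).map (strictMonoOn_add _) (by simp)).append_right u)
    hv hv' h
  rwa [resize_eq_self hv, ← hlen, resize_eq_self hv'] at this

lemma taskinLe_triangle_right {u u' v : List ℕ} (hu : IsPermWord u) (hu' : IsPermWord u')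
    (hv : IsPermWord v) (hlen : u'.length = u.length) (h : taskinLe (rsP u) (rsP u')) :
    taskinLe (rsP (triangle v u)) (rsP (triangle v u')) := by
  have := taskinLe_map (F := fun w => v.map (· + u.length) ++ resize u.length w)
    (fun w hw => by simpa [triangle, (hw.resize _).2] using (hw.resize u.length).1.triangle hv)
    (fun x y hx hy hxy => weakLe_append (weakLe_refl _) (fun _ => id) (hxy.resize hx _)
      fun _ => (hx.mem_resize_iff hy _).1)
    (fun x y hxy => (hxy.resize _).append_left _) hu hu' h
  rw [resize_eq_self hu, ← hlen, resize_eq_self hu'] at this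
  simpa only [triangle, hlen] using this

lemma triangle_filter_le_sub_filter_lt {σ : List ℕ} {p : ℕ}
    (hp : (σ.filter (· < p)).length = p) :
    triangle ((σ.filter (p ≤ ·)).map (· - p)) (σ.filter (· < p)) =
      σ.filter (p ≤ ·) ++ σ.filter (· < p) := by
  rw [triangle, hp, List.map_map]
  congr 1
  refine (List.map_congr_left fun t ht => ?_).trans (List.map_id _)
  simpa using Nat.sub_add_cancel (of_decide_eq_true (List.mem_filter.1 ht).2)

/-- **Main lemma.** Let `n = p + q`, `Σ = P(σ)` a standard tableau
with `n` cells, `A = st(Σ|{0,…,p-1})` and `B = st(Σ|{p,…,n-1})`.  Then for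
standard tableaux `U = P(u)` with `p` cells and `V = P(v)` with `q` cells:
`Σ ≤ V △ U` in the Taskin weak order iff `A ≤ U` and `B ≤ V`. -/
theorem taskin_main_lemma (p q : ℕ) (σ u v : List ℕ)
    (hσ : IsPermWord σ) (hu : IsPermWord u) (hv : IsPermWord v)
    (hσn : σ.length = p + q) (hup : u.length = p) (hvq : v.length = q) :
    taskinLe (rsP σ) (rsP (triangle v u)) ↔
      taskinLe (rsP (stW (σ.filter (· < p)))) (rsP u) ∧
      taskinLe (rsP (stW (σ.filter (fun x => p ≤ x)))) (rsP v) := by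
  have ha := hσ.filter_lt p
  have hb := hσ.filter_le_sub p
  have hal : (σ.filter (· < p)).length = p := by
    simpa [hσn] using (hσ.filter_lt_perm p).length_eq
  have hbl : ((σ.filter (p ≤ ·)).map (· - p)).length = q := by
    simpa [hσn] using (hσ.filter_le_sub_perm p).length_eq
  rw [stW_eq_self ha, stW_eq_map_sub (hσ.filter_le_perm p)]
  constructor
  · intro h
    have hσ' := hu.triangle hv
    refine ⟨?_, ?_⟩
    · simpa [← hup, filter_lt_triangle hu] using taskinLe_filter_lt hσ hσ' h p
    · simpa [← hup, filter_le_triangle hu] using taskinLe_filter_le_sub hσ hσ' h p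
  · rintro ⟨hAU, hBV⟩
    have h₀ : taskinLe (rsP σ)
        (rsP (triangle ((σ.filter (p ≤ ·)).map (· - p)) (σ.filter (· < p)))) := by
      rw [triangle_filter_le_sub_filter_lt hal]
      exact taskinLe_of_weakLe hσ (triangle_filter_le_sub_filter_lt hal ▸ ha.triangle hb)
        (weakLe_filter_append_filter σ p)
    have h₁ := taskinLe_triangle_left hb hv ha (hvq.trans hbl.symm) hBV
    have h₂ := taskinLe_triangle_right ha hu hv (hup.trans hal.symm) hAU
    exact h₀.trans (h₁.trans h₂)
end
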